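/- arXiv:math/0209305 — 8 statements merged into one kernel-verified Lean document; each statement's English description precedes it below -/
import Mathlib

section
/- Let R be a commutative ring, A an R-algebra which is the forcing algebra for elements f_1,...,f_n, h ∈ R, and let φ : A → R be an R-module homomorphism with u = φ(1). Then u·h ∈ (f_1,...,f_n)R. -/
open MvPolynomial

/-- The forcing ideal for data `f₁, …, fₙ; h`. -/
noncomputable def forcingIdeal {R : Type*} [CommRing R] {n : ℕ} (f : Fin n → R) (h : R) :
    Ideal (MvPolynomial (Fin n) R) :=
  Ideal.span {(∑ i, C (f i) * X i) + C h}

/-- The forcing algebra `R[T₁,…,Tₙ]/(f₁T₁ + … + fₙTₙ + h)`. -/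
abbrev ForcingAlgebra {R : Type*} [CommRing R] {n : ℕ} (f : Fin n → R) (h : R) :=
  MvPolynomial (Fin n) R ⧸ forcingIdeal f h

/-- If `φ : A → R` is an `R`-module homomorphism on the forcing algebra for
`f₁,…,fₙ; h` and `u = φ(1)`, then `u·h ∈ (f₁,…,fₙ)R`. -/
theorem order_element_mul_mem {R : Type*} [CommRing R] {n : ℕ} (f : Fin n → R) (h : R)
    (φ : ForcingAlgebra f h →ₗ[R] R) :
    φ 1 * h ∈ Ideal.span (Set.range f) := by
  set q := (Ideal.Quotient.mkₐ R (forcingIdeal f h)).toLinearMap with hq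
  have hzero : q ((∑ i, C (f i) * X i) + C h) = 0 := by
    show Ideal.Quotient.mk (forcingIdeal f h) _ = 0
    exact Ideal.Quotient.eq_zero_iff_mem.mpr (Ideal.subset_span rfl)
  have hCh : q (C h) = - ∑ i, (f i) • q (X i) := by
    have h2 : q (C h) = - q (∑ i, C (f i) * X i) := by
      have := hzero
      rw [map_add] at this
      linear_combination this
    rw [h2, map_sum]
    congr 1
    refine Finset.sum_congr rfl fun i _ => ?_
    rw [← smul_eq_C_mul, map_smul]
  have h1 : (h • (1 : ForcingAlgebra f h)) = q (C h) := by
    have : (C h : MvPolynomial (Fin n) R) = h • 1 := by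
      rw [smul_eq_C_mul, mul_one]
    rw [this, map_smul]
    congr 1
  rw [show φ 1 * h = φ (q (C h)) by rw [← h1, map_smul, smul_eq_mul, mul_comm]]
  rw [hCh, map_neg, map_sum]
  refine neg_mem (Ideal.sum_mem _ fun i _ => ?_)
  rw [map_smul, smul_eq_mul]
  exact Ideal.mul_mem_right _ _ (Ideal.subset_span ⟨i, rfl⟩)
end

section
/- Let R be a commutative ring containing a field of characteristic p > 0, let A be the forcing algebra for f_1,...,f_n, h ∈ R, and let φ : A → R be an R-module homomorphism with u = φ(1). Then for every q = p^e, u·h^q ∈ (f_1^q,...,f_n^q)R. -/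
open MvPolynomial

lemma forcing_smul_mk {R : Type*} [CommRing R] {n : ℕ} (f : Fin n → R) (h : R) (r : R)
    (x : MvPolynomial (Fin n) R) :
    r • (Ideal.Quotient.mk (forcingIdeal f h) x) = Ideal.Quotient.mk _ (C r * x) := by
  rw [← smul_eq_C_mul]
  exact (Submodule.Quotient.mk_smul (forcingIdeal f h) r x).symm

/-- If `R` contains a field of characteristic `p > 0`, `A` is the forcing algebra for
`f₁,…,fₙ; h`, and `φ : A → R` is `R`-linear with `u = φ(1)`, then `u·h^q ∈ (f₁^q,…,fₙ^q)`
for every `q = p^e`. -/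
theorem order_element_mul_pow_mem {R : Type*} [CommRing R] (K : Type*) [Field K] [Algebra K R]
    (p : ℕ) (hp : p.Prime) [CharP K p] [CharP R p] {n : ℕ} (f : Fin n → R) (h : R)
    (φ : ForcingAlgebra f h →ₗ[R] R) (e : ℕ) :
    φ 1 * h ^ p ^ e ∈ Ideal.span (Set.range fun i => f i ^ p ^ e) := by
  set q := p ^ e with hq
  haveI : ExpChar (MvPolynomial (Fin n) R) p := ExpChar.prime hp
  -- in the quotient, `C h = -∑ C (f i) * X i`
  have hCh : Ideal.Quotient.mk (forcingIdeal f h) (C h) = Ideal.Quotient.mk (forcingIdeal f h) (- ∑ i, C (f i) * X i) := by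
    rw [map_neg, eq_neg_iff_add_eq_zero, ← map_add, add_comm]
    exact Ideal.Quotient.eq_zero_iff_mem.mpr (Ideal.subset_span rfl)
  have hfrob : (∑ i, C (f i) * X i : MvPolynomial (Fin n) R) ^ q =
      ∑ i, C (f i ^ q) * X i ^ q := by
    rw [sum_pow_char_pow]
    exact Finset.sum_congr rfl fun i _ => by rw [mul_pow, C_pow]
  have key : Ideal.Quotient.mk (forcingIdeal f h) (C (h ^ q)) = ∑ i, (f i ^ q) • Ideal.Quotient.mk (forcingIdeal f h) ((-1) ^ q * X i ^ q) := by
    simp only [forcing_smul_mk, ← map_sum]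
    rw [C_pow, map_pow, hCh, ← map_pow, neg_pow, hfrob]
    congr 1
    rw [Finset.mul_sum]
    exact Finset.sum_congr rfl fun i _ => by ring
  have h1 : φ 1 * h ^ q = φ (Ideal.Quotient.mk (forcingIdeal f h) (C (h ^ q))) := by
    have h2 : (h ^ q) • (1 : ForcingAlgebra f h) = Ideal.Quotient.mk (forcingIdeal f h) (C (h ^ q)) := by
      have : (1 : ForcingAlgebra f h) = Ideal.Quotient.mk (forcingIdeal f h) 1 := rfl
      rw [this, forcing_smul_mk, mul_one]
    rw [← h2, map_smul, smul_eq_mul, mul_comm]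
  rw [h1, key, map_sum]
  refine Ideal.sum_mem _ fun i _ => ?_
  rw [map_smul, smul_eq_mul, mul_comm]
  exact Ideal.mul_mem_left _ _ (Ideal.subset_span ⟨i, rfl⟩)
end

section
/- Let R be a commutative ring with elements f_1,...,f_n, g_1,...,g_m and h, and suppose (f_1,...,f_n) ⊆ (g_1,...,g_m). Then there is an R-algebra homomorphism from the forcing algebra R[S_1,...,S_m]/(g_1S_1+...+g_mS_m+h) to the forcing algebra R[T_1,...,T_n]/(f_1T_1+...+f_nT_n+h). -/
open MvPolynomial

/-- If `(f₁,…,fₙ) ⊆ (g₁,…,g_m)`, then there is an `R`-algebra homomorphism from the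
forcing algebra for `g₁,…,g_m; h` to the forcing algebra for `f₁,…,fₙ; h`. -/
theorem forcing_algebra_hom_of_span_le {R : Type*} [CommRing R] {n m : ℕ}
    (f : Fin n → R) (g : Fin m → R) (h : R)
    (hfg : Ideal.span (Set.range f) ≤ Ideal.span (Set.range g)) :
    Nonempty (ForcingAlgebra g h →ₐ[R] ForcingAlgebra f h) := by
  have hmem : ∀ i, f i ∈ Ideal.span (Set.range g) := fun i =>
    hfg (Ideal.subset_span ⟨i, rfl⟩)
  choose a ha using fun i => (Submodule.mem_span_range_iff_exists_fun R).mp (hmem i)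
  let φ : MvPolynomial (Fin m) R →ₐ[R] ForcingAlgebra f h :=
    aeval (fun j => Ideal.Quotient.mk (forcingIdeal f h) (∑ i, C (a i j) * X i))
  have poly_eq : (∑ j, (C (g j) : MvPolynomial (Fin n) R) * (∑ i, C (a i j) * X i)) + C h
      = (∑ i, (C (f i) : MvPolynomial (Fin n) R) * X i) + C h := by
    congr 1
    simp_rw [Finset.mul_sum]
    rw [Finset.sum_comm]
    refine Finset.sum_congr rfl fun i _ => ?_
    simp_rw [← mul_assoc, ← C_mul, ← Finset.sum_mul, ← map_sum, ← ha i]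
    simp [smul_eq_mul, mul_comm]
  have key : φ ((∑ j, C (g j) * X j) + C h) = 0 := by
    have h1 : φ ((∑ j, C (g j) * X j) + C h)
        = Ideal.Quotient.mk (forcingIdeal f h)
          ((∑ j, C (g j) * (∑ i, C (a i j) * X i)) + C h) := by
      simp [φ, map_add, map_sum, map_mul, Finset.mul_sum, Algebra.smul_def,
        IsScalarTower.algebraMap_apply R (MvPolynomial (Fin n) R) (ForcingAlgebra f h),
        Ideal.Quotient.algebraMap_eq, MvPolynomial.algebraMap_eq]
    rw [h1, poly_eq]
    exact Ideal.Quotient.eq_zero_iff_mem.mpr (Ideal.subset_span rfl)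
  refine ⟨Ideal.Quotient.liftₐ (forcingIdeal g h) φ ?_⟩
  intro x hx
  have : forcingIdeal g h ≤ RingHom.ker φ := by
    rw [forcingIdeal, Ideal.span_le]
    simpa [Set.singleton_subset_iff, RingHom.mem_ker] using key
  exact this hx
end

section
/- Let R be a one-dimensional local Noetherian ring with maximal ideal m and let x ∈ R satisfy V(x) = V(m) (i.e., x is a parameter). Let A be an R-algebra. Then the localization map A → A_x is surjective if and only if x^k ∈ (x^{k+1})A for some k ∈ ℕ. -/
/-- Let `(R, m)` be a one-dimensional local Noetherian ring, `x ∈ R` a parameter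
(`V(x) = V(m)`, i.e. the radical of `(x)` is `m`) and `A` an `R`-algebra. The localization
map `A → A_x` is surjective if and only if `x^k ∈ (x^{k+1})A` for some `k ∈ ℕ`. -/
theorem localization_surjective_iff_pow_mem {R : Type*} [CommRing R] [IsNoetherianRing R]
    [IsLocalRing R] (hdim : ringKrullDim R = 1) (x : R)
    (hx : (Ideal.span {x}).radical = IsLocalRing.maximalIdeal R)
    (A : Type*) [CommRing A] [Algebra R A] :
    Function.Surjective (algebraMap A (Localization.Away (algebraMap R A x))) ↔
      ∃ k : ℕ, algebraMap R A x ^ k ∈ Ideal.span {algebraMap R A x ^ (k + 1)} := by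
  set y : A := algebraMap R A x with hy
  set S := Localization.Away y
  constructor
  · intro hsurj
    obtain ⟨u, hu⟩ := IsLocalization.Away.algebraMap_isUnit (S := S) y
    obtain ⟨a, ha⟩ := hsurj ↑u⁻¹
    have h1 : algebraMap A S (a * y) = algebraMap A S 1 := by
      rw [map_mul, ha, map_one, ← hu, Units.inv_mul]
    obtain ⟨n, hn⟩ := IsLocalization.Away.exists_of_eq (S := S) (x := y) h1
    refine ⟨n, Ideal.mem_span_singleton.mpr ⟨a, ?_⟩⟩
    rw [mul_one] at hn
    rw [← hn]; ring
  · rintro ⟨k, hk⟩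
    obtain ⟨a, ha⟩ := Ideal.mem_span_singleton.mp hk
    have hunit := IsLocalization.Away.algebraMap_pow_isUnit (S := S) k (x := y)
    have h0 : algebraMap A S y ^ k * (1 - algebraMap A S (y * a)) = 0 := by
      rw [← map_pow, mul_sub, mul_one, ← map_mul, ← map_sub]
      have : y ^ k - y ^ k * (y * a) = 0 := by linear_combination ha
      rw [this, map_zero]
    have hinv : algebraMap A S y * algebraMap A S a = 1 := by
      have h2 : (1 : S) - algebraMap A S (y * a) = 0 := by
        apply hunit.mul_left_cancel
        rw [mul_zero]; exact h0
      have h3 := sub_eq_zero.mp h2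
      rw [map_mul] at h3
      exact h3.symm
    intro s
    obtain ⟨n, b, hnb⟩ := IsLocalization.Away.surj (S := S) y s
    refine ⟨b * a ^ n, ?_⟩
    have hyan : algebraMap A S y ^ n * algebraMap A S a ^ n = 1 := by
      rw [← mul_pow, hinv, one_pow]
    calc algebraMap A S (b * a ^ n)
        = s * algebraMap A S y ^ n * algebraMap A S a ^ n := by rw [map_mul, map_pow, hnb]
      _ = s * (algebraMap A S y ^ n * algebraMap A S a ^ n) := by ring
      _ = s := by rw [hyan, mul_one]
end

section
/- Let R be a local Noetherian Cohen–Macaulay ring of dimension d and let x_1,...,x_d be a system of parameters. Then the annihilator in R of the Čech cohomology class 1/(x_1···x_d) ∈ H^d_m(R) equals the ideal (x_1,...,x_d). -/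
open RingTheory.Sequence IsLocalRing

section Aux

variable {R : Type*} [CommRing R]

private lemma powreg {I : Ideal R} {a : R} (h : ∀ z, a * z ∈ I → z ∈ I) :
    ∀ (n : ℕ) (z : R), a ^ n * z ∈ I → z ∈ I := by
  intro n
  induction n with
  | zero => intro z hz; simpa using hz
  | succ n ihn =>
    intro z hz
    have h2 : a ^ n * (a * z) ∈ I := by
      have h3 : a ^ n * (a * z) = a ^ (n + 1) * z := by ring
      rwa [h3]
    exact h z (ihn _ h2)

/-- The ideal generated by the `x i ^ e i`, `i ∈ s`. -/
private def Jd {d : ℕ} (x : Fin d → R) (e : Fin d → ℕ) (s : Finset (Fin d)) : Ideal R :=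
  Ideal.span ((fun i => x i ^ e i) '' ↑s)

private lemma Jd_congr {d : ℕ} (x : Fin d → R) {e e' : Fin d → ℕ} {s : Finset (Fin d)}
    (h : ∀ i ∈ s, e i = e' i) : Jd x e s = Jd x e' s := by
  unfold Jd
  congr 1
  ext r
  simp only [Set.mem_image, Finset.mem_coe]
  constructor
  · rintro ⟨i, hi, rfl⟩; exact ⟨i, hi, by rw [h i hi]⟩
  · rintro ⟨i, hi, rfl⟩; exact ⟨i, hi, by rw [h i hi]⟩

private lemma Jd_erase {d : ℕ} (x : Fin d → R) (e : Fin d → ℕ) {s : Finset (Fin d)}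
    {i0 : Fin d} (hi0 : i0 ∈ s) :
    Jd x e s = Ideal.span {x i0 ^ e i0} ⊔ Jd x e (s.erase i0) := by
  conv_lhs => rw [← Finset.insert_erase hi0]
  unfold Jd
  rw [Finset.coe_insert, Set.image_insert_eq, Ideal.span_insert]

private lemma Q1 {d : ℕ} (x : Fin d → R)
    (hbase : ∀ (s : Finset (Fin d)) (j : Fin d), j ∉ s →
      ∀ y, x j * y ∈ Ideal.span (x '' ↑s) → y ∈ Ideal.span (x '' ↑s)) :
    ∀ (N : ℕ) (e : Fin d → ℕ), (∀ i, 1 ≤ e i) → ∀ (s : Finset (Fin d)),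
      (∑ i ∈ s, e i) ≤ N → ∀ j, j ∉ s → ∀ y, x j * y ∈ Jd x e s → y ∈ Jd x e s := by
  intro N
  induction N using Nat.strong_induction_on with
  | _ N ih =>
  intro e he s hsum j hj y hy
  by_cases hall : ∀ i ∈ s, e i = 1
  · have him : (fun i => x i ^ e i) '' ↑s = x '' ↑s := by
      ext r
      simp only [Set.mem_image, Finset.mem_coe]
      constructor
      · rintro ⟨i, hi, rfl⟩; exact ⟨i, hi, by rw [hall i hi, pow_one]⟩
      · rintro ⟨i, hi, rfl⟩; exact ⟨i, hi, by rw [hall i hi, pow_one]⟩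
    unfold Jd at hy ⊢
    rw [him] at hy ⊢
    exact hbase s j hj y hy
  · push_neg at hall
    obtain ⟨i0, hi0s, hi0⟩ := hall
    have he2 : 2 ≤ e i0 := by have := he i0; omega
    set n := e i0 - 1 with hn
    have hn1 : 1 ≤ n := by omega
    have hen : e i0 = n + 1 := by omega
    have hsum_erase : e i0 + ∑ i ∈ s.erase i0, e i = ∑ i ∈ s, e i :=
      Finset.add_sum_erase s e hi0s
    have hN1 : 1 ≤ N := by omega
    -- x i0 is regular mod Jd x e (s.erase i0)
    have areg : ∀ z, x i0 * z ∈ Jd x e (s.erase i0) → z ∈ Jd x e (s.erase i0) := by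
      intro z hz
      exact ih (N - 1) (by omega) e he (s.erase i0) (by omega) i0
        (Finset.notMem_erase i0 s) z hz
    rw [Jd_erase x e hi0s] at hy
    obtain ⟨u, hu, v, hv, huv⟩ := Submodule.mem_sup.mp hy
    obtain ⟨c, hc⟩ := Ideal.mem_span_singleton'.mp hu
    -- Step 1: x j * y ∈ Jd x e1 s, where e1 = update e i0 n
    set e1 := Function.update e i0 n with he1def
    have he1ge : ∀ i, 1 ≤ e1 i := by
      intro i
      rw [he1def, Function.update_apply]
      split_ifs
      · omega
      · exact he i
    have he1i0 : e1 i0 = n := Function.update_self i0 n e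
    have he1erase : ∀ i ∈ s.erase i0, e1 i = e i := by
      intro i hi
      exact Function.update_of_ne (Finset.ne_of_mem_erase hi) n e
    have hsum1 : ∑ i ∈ s, e1 i ≤ N - 1 := by
      have h4 : e1 i0 + ∑ i ∈ s.erase i0, e1 i = ∑ i ∈ s, e1 i :=
        Finset.add_sum_erase s e1 hi0s
      have h5 : ∑ i ∈ s.erase i0, e1 i = ∑ i ∈ s.erase i0, e i :=
        Finset.sum_congr rfl he1erase
      omega
    have hJe1erase : Jd x e1 (s.erase i0) = Jd x e (s.erase i0) :=
      Jd_congr x he1erase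
    have hsplit1 : Jd x e1 s = Ideal.span {x i0 ^ n} ⊔ Jd x e (s.erase i0) := by
      rw [Jd_erase x e1 hi0s, hJe1erase, he1i0]
    have hy1 : x j * y ∈ Jd x e1 s := by
      rw [hsplit1]
      refine Submodule.mem_sup.mpr ⟨(c * x i0) * x i0 ^ n,
        Ideal.mem_span_singleton'.mpr ⟨c * x i0, rfl⟩, v, hv, ?_⟩
      rw [← huv, ← hc, hen]; ring
    have y1 : y ∈ Jd x e1 s :=
      ih (N - 1) (by omega) e1 he1ge s hsum1 j hj y hy1
    rw [hsplit1] at y1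
    obtain ⟨u', hu', b', hb', hub⟩ := Submodule.mem_sup.mp y1
    obtain ⟨c', hc'⟩ := Ideal.mem_span_singleton'.mp hu'
    -- Step 2
    have key : x i0 ^ n * (x j * c' - c * x i0) ∈ Jd x e (s.erase i0) := by
      have h1 : c * x i0 ^ (n + 1) + v = x j * y := by rw [← hen, hc, huv]
      have h2 : c' * x i0 ^ n + b' = y := by rw [hc', hub]
      have heq : x i0 ^ n * (x j * c' - c * x i0) = v - x j * b' := by
        linear_combination x j * h2 - h1
      rw [heq]
      exact Ideal.sub_mem _ hv (Ideal.mul_mem_left _ _ hb')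
    have step3 : x j * c' - c * x i0 ∈ Jd x e (s.erase i0) := powreg areg n _ key
    -- Step 4
    set e2 := Function.update e i0 1 with he2def
    have he2ge : ∀ i, 1 ≤ e2 i := by
      intro i
      rw [he2def, Function.update_apply]
      split_ifs
      · omega
      · exact he i
    have he2i0 : e2 i0 = 1 := Function.update_self i0 1 e
    have he2erase : ∀ i ∈ s.erase i0, e2 i = e i := by
      intro i hi
      exact Function.update_of_ne (Finset.ne_of_mem_erase hi) 1 e
    have hsum2 : ∑ i ∈ s, e2 i ≤ N - 1 := by
      have h4 : e2 i0 + ∑ i ∈ s.erase i0, e2 i = ∑ i ∈ s, e2 i :=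
        Finset.add_sum_erase s e2 hi0s
      have h5 : ∑ i ∈ s.erase i0, e2 i = ∑ i ∈ s.erase i0, e i :=
        Finset.sum_congr rfl he2erase
      omega
    have hsplit2 : Jd x e2 s = Ideal.span {x i0 ^ 1} ⊔ Jd x e (s.erase i0) := by
      rw [Jd_erase x e2 hi0s, Jd_congr x he2erase, he2i0]
    have hxjc' : x j * c' ∈ Jd x e2 s := by
      rw [hsplit2]
      refine Submodule.mem_sup.mpr ⟨c * x i0 ^ 1,
        Ideal.mem_span_singleton'.mpr ⟨c, rfl⟩, x j * c' - c * x i0, step3, by ring⟩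
    have c'mem : c' ∈ Jd x e2 s :=
      ih (N - 1) (by omega) e2 he2ge s hsum2 j hj c' hxjc'
    rw [hsplit2] at c'mem
    obtain ⟨u'', hu'', b'', hb'', hub2⟩ := Submodule.mem_sup.mp c'mem
    obtain ⟨c'', hc''⟩ := Ideal.mem_span_singleton'.mp hu''
    -- Step 5
    rw [Jd_erase x e hi0s]
    refine Submodule.mem_sup.mpr ⟨c'' * x i0 ^ (e i0),
      Ideal.mem_span_singleton'.mpr ⟨c'', rfl⟩,
      x i0 ^ n * b'' + b',
      Ideal.add_mem _ (Ideal.mul_mem_left _ _ hb'') hb', ?_⟩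
    have h2 : c' * x i0 ^ n + b' = y := by rw [hc', hub]
    have h3 : c'' * x i0 ^ 1 + b'' = c' := by rw [hc'', hub2]
    rw [hen]
    linear_combination h2 + x i0 ^ n * h3

private lemma Lmain {d : ℕ} (x : Fin d → R)
    (hQ : ∀ (e : Fin d → ℕ), (∀ i, 1 ≤ e i) → ∀ (s : Finset (Fin d)) (j : Fin d), j ∉ s →
      ∀ y, x j * y ∈ Jd x e s → y ∈ Jd x e s)
    (t : ℕ) (ht : 1 ≤ t) :
    ∀ (s u : Finset (Fin d)), Disjoint s u → ∀ a : R,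
      a * ∏ i ∈ s, x i ∈ Jd x (fun i => if i ∈ s then t + 1 else t) (s ∪ u) →
      a ∈ Jd x (fun _ => t) (s ∪ u) := by
  intro s
  induction s using Finset.induction_on with
  | empty =>
    intro u _ a h
    rw [Jd_congr x (fun i _ => by simp : ∀ i ∈ ((∅ : Finset (Fin d)) ∪ u),
      (if i ∈ (∅ : Finset (Fin d)) then t + 1 else t) = t)] at h
    simpa using h
  | @insert i0 s' hi0 ih =>
    intro u hdisj a h
    have hi0u : i0 ∉ u := Finset.disjoint_left.mp hdisj (Finset.mem_insert_self i0 s')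
    have hi0su : i0 ∉ s' ∪ u := by simp [hi0, hi0u]
    set e := fun i => if i ∈ insert i0 s' then t + 1 else t with hedef
    have hge : ∀ i, 1 ≤ e i := by
      intro i
      rw [hedef]
      dsimp only
      split_ifs <;> omega
    rw [Finset.insert_union] at h
    rw [Jd_erase x e (Finset.mem_insert_self i0 (s' ∪ u)), Finset.erase_insert hi0su] at h
    have hei0 : e i0 = t + 1 := if_pos (Finset.mem_insert_self _ _)
    obtain ⟨uu, huu, b, hb, hub⟩ := Submodule.mem_sup.mp h
    obtain ⟨c, hc⟩ := Ideal.mem_span_singleton'.mp huu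
    have hprod : ∏ i ∈ insert i0 s', x i = x i0 * ∏ i ∈ s', x i := Finset.prod_insert hi0
    have key : x i0 * (a * ∏ i ∈ s', x i - c * x i0 ^ t) ∈ Jd x e (s' ∪ u) := by
      have h1 : c * x i0 ^ (t + 1) + b = a * (x i0 * ∏ i ∈ s', x i) := by
        rw [← hprod, ← hub, ← hc, hei0]
      have heq : x i0 * (a * ∏ i ∈ s', x i - c * x i0 ^ t) = b := by
        linear_combination -h1
      rw [heq]
      exact hb
    have step := hQ e hge (s' ∪ u) i0 hi0su _ key
    set e' := fun i => if i ∈ s' then t + 1 else t with he'def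
    have hsplit : Jd x e' (s' ∪ insert i0 u) = Ideal.span {x i0 ^ t} ⊔ Jd x e (s' ∪ u) := by
      have hmem : i0 ∈ s' ∪ insert i0 u := by simp
      rw [Jd_erase x e' hmem]
      have her : (s' ∪ insert i0 u).erase i0 = s' ∪ u := by
        ext i
        simp only [Finset.mem_erase, Finset.mem_union, Finset.mem_insert]
        constructor
        · rintro ⟨hne, hin⟩
          rcases hin with hin | hin | hin
          · exact Or.inl hin
          · exact absurd hin hne
          · exact Or.inr hin
        · rintro (hin | hin)
          · exact ⟨fun hh => hi0 (hh ▸ hin), Or.inl hin⟩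
          · exact ⟨fun hh => hi0u (hh ▸ hin), Or.inr (Or.inr hin)⟩
      rw [her]
      have he'i0 : e' i0 = t := if_neg hi0
      rw [he'i0]
      congr 1
      refine Jd_congr x (fun i hi => ?_)
      rcases Finset.mem_union.mp hi with hin | hin
      · rw [he'def, hedef]
        simp only [if_pos hin, if_pos (Finset.mem_insert_of_mem hin)]
      · have hne : i ≠ i0 := fun hh => hi0u (hh ▸ hin)
        have hns' : i ∉ s' := fun hh => (Finset.disjoint_left.mp hdisj
          (Finset.mem_insert_of_mem hh)) hin
        have hnins : i ∉ insert i0 s' := by simp [hne, hns']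
        rw [he'def, hedef]
        simp only [if_neg hns', if_neg hnins]
    have h2 : a * ∏ i ∈ s', x i ∈ Jd x e' (s' ∪ insert i0 u) := by
      rw [hsplit]
      exact Submodule.mem_sup.mpr ⟨c * x i0 ^ t,
        Ideal.mem_span_singleton'.mpr ⟨c, rfl⟩, _, step, by ring⟩
    have hdisj' : Disjoint s' (insert i0 u) := by
      rw [Finset.disjoint_left]
      intro i hi hmem
      rcases Finset.mem_insert.mp hmem with hh | hh
      · exact hi0 (hh ▸ hi)
      · exact (Finset.disjoint_left.mp hdisj (Finset.mem_insert_of_mem hi)) hh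
    have hres := ih (insert i0 u) hdisj' a h2
    have hset : s' ∪ insert i0 u = insert i0 s' ∪ u := by
      ext i
      simp only [Finset.mem_union, Finset.mem_insert]
      tauto
    rwa [hset] at hres

end Aux

section Base

variable {R : Type*} [CommRing R] [IsNoetherianRing R] [IsLocalRing R]

private lemma perm_aux {d : ℕ} (x : Fin d → R) (s : Finset (Fin d)) (j : Fin d) (hj : j ∉ s) :
    List.Perm (List.ofFn x)
      (s.toList.map x ++ x j :: ((Finset.univ \ insert j s).toList.map x)) := by
  rw [← Multiset.coe_eq_coe]
  have h1 : ∀ (t : Finset (Fin d)), ((t.toList.map x : List R) : Multiset R)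
      = t.val.map x := by
    intro t
    rw [← Multiset.map_coe, Finset.coe_toList]
  simp only [← Multiset.coe_add, ← Multiset.cons_coe, h1]
  rw [List.ofFn_eq_map]
  have h2 : ((List.finRange d : List (Fin d)) : Multiset (Fin d)) = Finset.univ.val := rfl
  rw [← Multiset.map_coe, h2]
  rw [← Multiset.map_cons, ← Multiset.map_add]
  congr 1
  have hnotmem : j ∉ (Finset.univ \ insert j s) := by simp
  rw [← Finset.insert_val_of_notMem hnotmem]
  have hd : Disjoint s (insert j (Finset.univ \ insert j s)) := by
    rw [Finset.disjoint_left]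
    intro a ha hmem
    rcases Finset.mem_insert.mp hmem with h | h
    · exact hj (h ▸ ha)
    · exact (Finset.mem_sdiff.mp h).2 (Finset.mem_insert_of_mem ha)
  rw [show s.val + (insert j (Finset.univ \ insert j s)).val
      = (s.disjUnion _ hd).val from rfl]
  have huniv : (Finset.univ : Finset (Fin d)) = s.disjUnion _ hd := by
    ext a
    simp only [Finset.mem_univ, Finset.mem_disjUnion, Finset.mem_insert, Finset.mem_sdiff,
      true_iff, true_and]
    by_cases h : a ∈ s
    · exact Or.inl h
    · by_cases h' : a = j
      · exact Or.inr (Or.inl h')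
      · exact Or.inr (Or.inr (by simp [h, h']))
  rw [← huniv]

private lemma base_aux {d : ℕ} (x : Fin d → R)
    (hreg : RingTheory.Sequence.IsRegular R (List.ofFn x))
    (s : Finset (Fin d)) (j : Fin d) (hj : j ∉ s) :
    ∀ y : R, x j * y ∈ Ideal.span (x '' ↑s) → y ∈ Ideal.span (x '' ↑s) := by
  intro y hy
  have hperm := perm_aux x s j hj
  have hreg2 := IsLocalRing.isRegular_of_perm hreg hperm
  have hw := hreg2.toIsWeaklyRegular
  rw [RingTheory.Sequence.isWeaklyRegular_append_iff] at hw
  have hcons := hw.2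
  rw [RingTheory.Sequence.isWeaklyRegular_cons_iff] at hcons
  have hsm := hcons.1
  have hset : {r : R | r ∈ s.toList.map x} = x '' ↑s := by
    ext r; simp
  have hI : Ideal.ofList (s.toList.map x) = Ideal.span (x '' ↑s) := by
    unfold Ideal.ofList; rw [hset]
  have hIT : (Ideal.ofList (s.toList.map x) • ⊤ : Submodule R R)
      = (Ideal.span (x '' ↑s) : Submodule R R) := by
    rw [hI, smul_eq_mul, Ideal.mul_top]
  rw [hIT] at hsm
  have h0 : x j • (Submodule.Quotient.mk y :
      R ⧸ (Ideal.span (x '' ↑s) : Submodule R R)) = x j • (Submodule.Quotient.mk 0) := by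
    rw [← Submodule.Quotient.mk_smul, ← Submodule.Quotient.mk_smul, Submodule.Quotient.eq]
    simpa using hy
  have h1 := hsm h0
  rw [Submodule.Quotient.eq] at h1
  simpa using h1

end Base

/-- A local Noetherian ring is Cohen–Macaulay iff every system of parameters
(a family of `d = dim R` elements generating an ideal with radical the maximal ideal)
is a regular sequence. We take this as the definition. -/
def IsCohenMacaulayLocal (R : Type*) [CommRing R] [IsLocalRing R] : Prop :=
  ∀ (d : ℕ) (x : Fin d → R), ringKrullDim R = d →
    (Ideal.span (Set.range x)).radical = IsLocalRing.maximalIdeal R →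
    RingTheory.Sequence.IsRegular R (List.ofFn x)

/-- In a Cohen–Macaulay local ring of dimension `d` with system of parameters `x₁,…,x_d`,
the annihilator of the Čech class `1/(x₁⋯x_d) ∈ H^d_m(R)` equals `(x₁,…,x_d)`:
an element `r` kills the class (i.e. `r(x₁⋯x_d)^k ∈ (x₁^{k+1},…,x_d^{k+1})` for
some `k`) iff `r ∈ (x₁,…,x_d)`. -/
theorem ann_paraclass_eq_span {R : Type*} [CommRing R] [IsNoetherianRing R] [IsLocalRing R]
    (hCM : IsCohenMacaulayLocal R) {d : ℕ} (hdim : ringKrullDim R = d) (x : Fin d → R)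
    (hpar : (Ideal.span (Set.range x)).radical = IsLocalRing.maximalIdeal R) :
    {r : R | ∃ k : ℕ, r * (∏ i, x i) ^ k ∈ Ideal.span (Set.range fun i => x i ^ (k + 1))}
      = ↑(Ideal.span (Set.range x)) := by
  have hreg : RingTheory.Sequence.IsRegular R (List.ofFn x) := hCM d x hdim hpar
  have hQ : ∀ (e : Fin d → ℕ), (∀ i, 1 ≤ e i) → ∀ (s : Finset (Fin d)) (j : Fin d), j ∉ s →
      ∀ y, x j * y ∈ Jd x e s → y ∈ Jd x e s := by
    intro e hge s j hj y hy
    exact Q1 x (fun s j hj => base_aux x hreg s j hj) (∑ i ∈ s, e i) e hge s le_rfl j hj y hy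
  -- identify `span (range fun i => x i ^ m)` with `Jd x (fun _ => m) univ`
  have hrange : ∀ m : ℕ, Ideal.span (Set.range fun i => x i ^ m)
      = Jd x (fun _ => m) Finset.univ := by
    intro m
    unfold Jd
    rw [Finset.coe_univ, Set.image_univ]
  have claim : ∀ (k : ℕ) (r : R),
      r * (∏ i, x i) ^ k ∈ Ideal.span (Set.range fun i => x i ^ (k + 1)) →
      r ∈ Ideal.span (Set.range x) := by
    intro k
    induction k with
    | zero =>
      intro r hr
      have : Ideal.span (Set.range fun i => x i ^ (0 + 1)) = Ideal.span (Set.range x) := by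
        simp [pow_one]
      rw [this] at hr
      simpa using hr
    | succ k ihk =>
      intro r hr
      apply ihk
      have hL := Lmain x hQ (k + 1) (by omega) Finset.univ ∅
        (Finset.disjoint_empty_right _) (r * (∏ i, x i) ^ k) ?_
      · rw [Finset.union_empty] at hL
        rwa [hrange]
      · rw [Finset.union_empty]
        have he : Jd x (fun i => if i ∈ (Finset.univ : Finset (Fin d)) then k + 1 + 1 else k + 1)
            Finset.univ = Jd x (fun _ => k + 2) Finset.univ :=
          Jd_congr x (fun i hi => by simp)
        rw [he]
        have hmul : r * (∏ i, x i) ^ k * ∏ i ∈ Finset.univ, x i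
            = r * (∏ i, x i) ^ (k + 1) := by ring
        rw [hmul, ← hrange]
        exact hr
  ext r
  simp only [Set.mem_setOf_eq, SetLike.mem_coe]
  constructor
  · rintro ⟨k, hk⟩
    exact claim k r hk
  · intro hr
    refine ⟨0, ?_⟩
    have : Ideal.span (Set.range fun i => x i ^ (0 + 1)) = Ideal.span (Set.range x) := by
      simp [pow_one]
    rw [this]
    simpa using hr
end

section
/- Let R be a local Noetherian Cohen–Macaulay ring of dimension d and let x_1,...,x_d be a system of parameters, and r ∈ R. Then r(x_1···x_d)^k ∈ (x_1^{k+1},...,x_d^{k+1}) for some k ∈ ℕ if and only if r ∈ (x_1,...,x_d). -/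
open Ideal Set

namespace Ideal

variable {R ι : Type*} [CommRing R]

theorem radical_span_range_pow (x : ι → R) {e : ι → ℕ} (he : ∀ i, e i ≠ 0) :
    (span (range fun i => x i ^ e i)).radical = (span (range x)).radical := by
  refine le_antisymm (radical_le_radical_iff.mpr ?_) (radical_le_radical_iff.mpr ?_) <;>
    rw [span_le] <;> rintro _ ⟨i, rfl⟩
  · exact le_radical <|
      pow_mem_of_mem _ (subset_span (mem_range_self i)) _ (Nat.pos_of_ne_zero (he i))
  · exact ⟨e i, subset_span (mem_range_self i)⟩

theorem span_range_eq_span_image_compl_sup (f : ι → R) (j : ι) :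
    span (range f) = span (f '' {j}ᶜ) ⊔ span {f j} := by
  rw [← image_univ, ← union_compl_self {j}, image_union, image_singleton, span_union, sup_comm]

theorem mem_sup_span_singleton_of_mul_pow_mem {I : Ideal R} {y : R}
    (hy : IsSMulRegular (R ⧸ I) y) {s : R} {k : ℕ}
    (hs : s * y ^ k ∈ I ⊔ span {y ^ (k + 1)}) : s ∈ I ⊔ span {y} := by
  obtain ⟨u, hu, v, hv, huv⟩ := Submodule.mem_sup.mp hs
  obtain ⟨a, rfl⟩ := mem_span_singleton'.mp hv
  have hrem : y ^ k • (s - a * y) ∈ I := by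
    convert hu using 1
    rw [smul_eq_mul]
    linear_combination -huv
  refine Submodule.mem_sup.mpr ⟨_, mem_of_isSMulRegular_quotient_of_smul_mem (hy.pow k) hrem,
    a * y, mem_span_singleton'.mpr ⟨a, rfl⟩, sub_add_cancel s _⟩

theorem mem_span_range_of_mul_prod_pow_mem [DecidableEq ι] {x : ι → R}
    (hreg : ∀ e : ι → ℕ, (∀ i, e i ≠ 0) → ∀ j,
      IsSMulRegular (R ⧸ span ((fun i => x i ^ e i) '' {j}ᶜ)) (x j))
    (k : ℕ) (S : Finset ι) {s : R}
    (hs : s * ∏ i ∈ S, x i ^ k ∈ span (range fun i => x i ^ if i ∈ S then k + 1 else 1)) :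
    s ∈ span (range x) := by
  induction S using Finset.induction_on generalizing s with
  | empty => simpa using hs
  | insert j T hj ih =>
    set e : ι → ℕ := fun i => if i ∈ T then k + 1 else 1
    have he : ∀ i, e i ≠ 0 := fun i => by positivity
    have hcompl : (fun i => x i ^ if i ∈ insert j T then k + 1 else 1) '' {j}ᶜ =
        (fun i => x i ^ e i) '' {j}ᶜ :=
      image_congr fun i hi => by simp [e, Finset.mem_insert, show i ≠ j from hi]
    rw [span_range_eq_span_image_compl_sup _ j, hcompl, Finset.prod_insert hj,
      mul_left_comm] at hs
    apply ih
    rw [span_range_eq_span_image_compl_sup _ j]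
    simp only [if_neg hj, pow_one]
    exact mem_sup_span_singleton_of_mul_pow_mem (hreg e he j) (by simpa [mul_comm] using hs)

end Ideal

open RingTheory.Sequence in
theorem IsCohenMacaulayLocal.isSMulRegular_quotient_span_image_compl {R : Type*} [CommRing R]
    [IsLocalRing R] (hCM : IsCohenMacaulayLocal R) {d : ℕ} (hdim : ringKrullDim R = d)
    {y : Fin d → R} (hy : (span (range y)).radical = IsLocalRing.maximalIdeal R) (j : Fin d) :
    IsSMulRegular (R ⧸ span (y '' {j}ᶜ)) (y j) := by
  cases d with
  | zero => exact j.elim0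
  | succ n =>
    have hrange : range (Fin.snoc (Fin.removeNth j y) (y j) : Fin (n + 1) → R) = range y := by
      conv_rhs => rw [← Fin.insertNth_self_removeNth j y, Fin.range_insertNth]
      exact Fin.range_snoc _ _
    have hreg := (hCM _ _ hdim (hrange ▸ hy)).toIsWeaklyRegular
    have hlist : List.ofFn (Fin.snoc (Fin.removeNth j y) (y j) : Fin (n + 1) → R) =
        List.ofFn (Fin.removeNth j y) ++ [y j] := by
      rw [List.ofFn_succ']
      simp
    have hI :
        (ofList (List.ofFn (Fin.removeNth j y)) • ⊤ : Submodule R R) = span (y '' {j}ᶜ) := by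
      rw [smul_eq_mul, mul_top, ← Fin.range_succAbove, ← range_comp]
      exact congrArg span (Set.ext fun a => List.mem_ofFn' _ a)
    rw [hlist, isWeaklyRegular_append_iff, isWeaklyRegular_singleton_iff, hI] at hreg
    exact hreg.2

theorem paraclass_vanishes_iff_mem_general {R : Type*} [CommRing R]
    [IsLocalRing R] (hCM : IsCohenMacaulayLocal R) {d : ℕ} (hdim : ringKrullDim R = d)
    (x : Fin d → R)
    (hpar : (Ideal.span (Set.range x)).radical = IsLocalRing.maximalIdeal R) (r : R) :
    (∃ k : ℕ, r * (∏ i, x i) ^ k ∈ Ideal.span (Set.range fun i => x i ^ (k + 1))) ↔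
      r ∈ Ideal.span (Set.range x) := by
  refine ⟨fun ⟨k, hk⟩ => ?_, fun hr => ⟨0, by simpa using hr⟩⟩
  have hreg : ∀ e : Fin d → ℕ, (∀ i, e i ≠ 0) → ∀ j,
      IsSMulRegular (R ⧸ span ((fun i => x i ^ e i) '' {j}ᶜ)) (x j) := fun e he j =>
    (IsSMulRegular.pow_iff (Nat.pos_of_ne_zero (he j))).mp <|
      hCM.isSMulRegular_quotient_span_image_compl hdim ((radical_span_range_pow x he).trans hpar) j
  exact mem_span_range_of_mul_prod_pow_mem hreg k Finset.univ <| by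
    simpa [Finset.prod_pow] using hk

/-- In a Cohen–Macaulay local ring of dimension `d` with system of parameters `x₁,…,x_d`
and `r ∈ R`: `r(x₁⋯x_d)^k ∈ (x₁^{k+1},…,x_d^{k+1})` for some `k ∈ ℕ` if and only if
`r ∈ (x₁,…,x_d)` (vanishing of the paraclass `r/(x₁⋯x_d)` in `H^d_m(R)`). -/
theorem paraclass_vanishes_iff_mem {R : Type*} [CommRing R] [IsNoetherianRing R]
    [IsLocalRing R] (hCM : IsCohenMacaulayLocal R) {d : ℕ} (hdim : ringKrullDim R = d)
    (x : Fin d → R)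
    (hpar : (Ideal.span (Set.range x)).radical = IsLocalRing.maximalIdeal R) (r : R) :
    (∃ k : ℕ, r * (∏ i, x i) ^ k ∈ Ideal.span (Set.range fun i => x i ^ (k + 1))) ↔
      r ∈ Ideal.span (Set.range x) :=
  paraclass_vanishes_iff_mem_general hCM hdim x hpar r
end

section
/- Let R = K[[X_1,...,X_d]] be a power series ring over a field K, let I = (f_1,...,f_n) be an ideal and h ∈ R with h ∉ I. Then there exists r = (r_1,...,r_d) ∈ ℕ^d such that h ∉ (I, X_1^{r_1+1},...,X_d^{r_d+1}) but h·X_i ∈ (I, X_1^{r_1+1},...,X_d^{r_d+1}) for every i = 1,...,d. -/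
/-!
Krull's intersection theorem, applied to the module `K[[X]] ⧸ I` over the Noetherian local ring
`K[[X]]`, shows `⋂ₖ (I + 𝔪ᵏ) = I`. As `Xᵢ^(k+1) ∈ 𝔪^(k+1)`, some uniform exponent `k` gives
`h ∉ (I, X₁^(k+1), …, X_d^(k+1))`. Among all exponent vectors `r` with `h ∉ (I, X^(r+1))` take
one that is minimal for the product order. Then `hXᵢ` lies in the ideal: trivially if `rᵢ = 0`,
and otherwise because lowering `rᵢ` by one puts `h` into the larger ideal
`(I, X^(r-eᵢ+1))`, whose product with `Xᵢ` lies in `(I, X^(r+1))`.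
-/

open MvPowerSeries Set

theorem Ideal.iInf_sup_pow_eq_of_isLocalRing {R : Type*} [CommRing R] [IsNoetherianRing R]
    [IsLocalRing R] (J : Ideal R) {I : Ideal R} (hI : I ≠ ⊤) : ⨅ k : ℕ, J ⊔ I ^ k = J := by
  refine le_antisymm (fun x hx => ?_) (le_iInf fun _ => le_sup_left)
  have hx' : Ideal.Quotient.mk J x ∈ (⨅ k : ℕ, I ^ k • ⊤ : Submodule R (R ⧸ J)) :=
    (Submodule.mem_iInf _).2 fun k => by
      rw [Ideal.smul_top_eq_map, Submodule.restrictScalars_mem]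
      exact Ideal.mem_quotient_iff_mem_sup.2 (sup_comm J (I ^ k) ▸ (Submodule.mem_iInf _).1 hx k)
  rw [Ideal.iInf_pow_smul_eq_bot_of_isLocalRing I hI] at hx'
  exact Ideal.Quotient.eq_zero_iff_mem.1 hx'

theorem MvPowerSeries.X_mem_maximalIdeal {σ R : Type*} [CommRing R] [IsLocalRing R] (i : σ) :
    X i ∈ IsLocalRing.maximalIdeal (MvPowerSeries σ R) := by
  rw [IsLocalRing.mem_maximalIdeal, mem_nonunits_iff, isUnit_iff_constantCoeff, constantCoeff_X]
  exact not_isUnit_zero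

theorem MvPowerSeries.exists_notMem_sup_span_X_pow {σ R : Type*} [Finite σ] [CommRing R]
    [IsNoetherianRing R] [IsLocalRing R] {J : Ideal (MvPowerSeries σ R)}
    {h : MvPowerSeries σ R} (hh : h ∉ J) :
    ∃ k : ℕ, h ∉ J ⊔ Ideal.span (range fun i => X i ^ (k + 1)) := by
  by_contra! H
  apply hh
  rw [← Ideal.iInf_sup_pow_eq_of_isLocalRing J (IsLocalRing.maximalIdeal.isMaximal _).ne_top,
    Submodule.mem_iInf]
  intro k
  refine sup_le_sup_left ?_ J (H k)
  rw [Ideal.span_le]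
  rintro _ ⟨i, rfl⟩
  exact Ideal.pow_le_pow_right k.le_succ (Ideal.pow_mem_pow (X_mem_maximalIdeal i) _)

theorem Ideal.sup_span_pow_update_le_colon {R ι : Type*} [CommRing R] [DecidableEq ι]
    (J : Ideal R) (x : ι → R) {r : ι → ℕ} {i : ι} {s : ℕ} (hr : r i = s + 1) :
    J ⊔ Ideal.span (range fun j => x j ^ (Function.update r i s j + 1)) ≤
      (J ⊔ Ideal.span (range fun j => x j ^ (r j + 1))).colon {x i} := by
  refine sup_le (le_sup_left.trans Ideal.le_colon) (Ideal.span_le.2 ?_)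
  rintro _ ⟨j, rfl⟩
  rw [SetLike.mem_coe, Submodule.mem_colon_singleton, smul_eq_mul]
  refine Ideal.mem_sup_right ?_
  dsimp only
  rcases eq_or_ne j i with rfl | hji
  · rw [Function.update_self, ← pow_succ, ← hr]
    exact Ideal.subset_span ⟨j, rfl⟩
  · rw [Function.update_of_ne hji]
    exact Ideal.mul_mem_right _ _ (Ideal.subset_span ⟨j, rfl⟩)

/-- Let `R = K[[X₁,…,X_d]]`, `I = (f₁,…,fₙ)` and `h ∉ I`. Then there is
`r = (r₁,…,r_d) ∈ ℕ^d` with `h ∉ (I, X₁^{r₁+1},…,X_d^{r_d+1})` but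
`h·Xᵢ ∈ (I, X₁^{r₁+1},…,X_d^{r_d+1})` for every `i`. -/
theorem exists_box_exponent {K : Type*} [Field K] {d n : ℕ}
    (f : Fin n → MvPowerSeries (Fin d) K) (h : MvPowerSeries (Fin d) K)
    (hh : h ∉ Ideal.span (Set.range f)) :
    ∃ r : Fin d → ℕ,
      h ∉ Ideal.span (Set.range f) ⊔
          Ideal.span (Set.range fun i => MvPowerSeries.X i ^ (r i + 1)) ∧
        ∀ i : Fin d, h * MvPowerSeries.X i ∈
          Ideal.span (Set.range f) ⊔
            Ideal.span (Set.range fun i => MvPowerSeries.X i ^ (r i + 1)) := by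
  classical
  set Q : (Fin d → ℕ) → Ideal (MvPowerSeries (Fin d) K) := fun r =>
    Ideal.span (range f) ⊔ Ideal.span (range fun i => X i ^ (r i + 1))
  obtain ⟨k, hk⟩ := exists_notMem_sup_span_X_pow hh
  obtain ⟨r, hr, hmin⟩ := wellFounded_lt.has_min {r | h ∉ Q r} ⟨fun _ => k, hk⟩
  refine ⟨r, hr, fun i => ?_⟩
  rcases hri : r i with _ | s
  · refine Ideal.mem_sup_right (Ideal.mul_mem_left _ h (Ideal.subset_span ⟨i, ?_⟩))
    simp only [hri, zero_add, pow_one]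
  · have hlt : Function.update r i s < r := update_lt_self_iff.2 (by omega)
    have hs : h ∈ Q (Function.update r i s) := by_contra fun hs => hmin _ hs hlt
    exact Submodule.mem_colon_singleton.1 (Ideal.sup_span_pow_update_le_colon _ X hri hs)
end

section
/- Let C be a local three-dimensional regular ring with maximal ideal m = (x,y,z), and let R = C/(x^i + y^j − z^k) with k > i ≥ 1, j ≥ 1. In the forcing algebra A = R[T_1,T_2]/(xT_1 + yT_2 − z), one has x^i ∈ (y, x^{i+1})A. -/
open MvPolynomial

/-- The hypersurface ring `R = C/(x^i + y^j - z^k)`. -/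
abbrev Hyp18 {S : Type*} [CommRing S] (x y z : S) (i j k : ℕ) :=
  S ⧸ Ideal.span ({x ^ i + y ^ j - z ^ k} : Set S)

/-- The forcing ideal `(x·T₁ + y·T₂ - z)` over `R = C/(x^i + y^j - z^k)`. -/
noncomputable def forcingIdeal18 {S : Type*} [CommRing S] (x y z : S) (i j k : ℕ) :
    Ideal (MvPolynomial (Fin 2) (Hyp18 x y z i j k)) :=
  Ideal.span
    {C (Ideal.Quotient.mk _ x) * X 0 + C (Ideal.Quotient.mk _ y) * X 1 -
      C (Ideal.Quotient.mk _ z)}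

/-- The forcing algebra `A = R[T₁,T₂]/(xT₁ + yT₂ - z)` over `R = C/(x^i + y^j - z^k)`. -/
abbrev ForcingAlgebra18 {S : Type*} [CommRing S] (x y z : S) (i j k : ℕ) :=
  MvPolynomial (Fin 2) (Hyp18 x y z i j k) ⧸ forcingIdeal18 x y z i j k

theorem pow_mem_span_of_add_pow_eq_pow {A : Type*} [CommRing A] {a b t₁ t₂ : A} {i j k : ℕ}
    (hik : i < k) (hj : 1 ≤ j) (hrel : a ^ i + b ^ j = (a * t₁ + b * t₂) ^ k) :
    a ^ i ∈ Ideal.span {b, a ^ (i + 1)} := by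
  -- `(a t₁ + b t₂)^k ≡ (a t₁)^k` modulo `b`, and `(a t₁)^k` is a multiple of `a^(i+1)`.
  obtain ⟨q, hq⟩ := sub_dvd_pow_sub_pow (a * t₁ + b * t₂) (a * t₁) k
  obtain ⟨j, rfl⟩ := Nat.exists_eq_add_of_le' hj
  obtain ⟨e, rfl⟩ := Nat.exists_eq_add_of_lt hik
  rw [Ideal.mem_span_pair]
  exact ⟨t₂ * q - b ^ j, a ^ e * t₁ ^ (i + e + 1), by linear_combination -hq - hrel⟩

theorem hyp18_relation {S : Type*} [CommRing S] (x y z : S) (i j k : ℕ) :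
    (Ideal.Quotient.mk _ x : Hyp18 x y z i j k) ^ i + Ideal.Quotient.mk _ y ^ j =
      Ideal.Quotient.mk _ z ^ k := by
  have h := Ideal.Quotient.eq.mpr
    (Ideal.subset_span rfl : x ^ i + y ^ j - z ^ k ∈ Ideal.span {x ^ i + y ^ j - z ^ k})
  rwa [map_add, map_pow, map_pow, map_pow] at h

theorem forcingAlgebra18_relation {S : Type*} [CommRing S] (x y z : S) (i j k : ℕ) :
    algebraMap (Hyp18 x y z i j k) (ForcingAlgebra18 x y z i j k) (Ideal.Quotient.mk _ x) *
          Ideal.Quotient.mk _ (X 0) +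
        algebraMap (Hyp18 x y z i j k) (ForcingAlgebra18 x y z i j k) (Ideal.Quotient.mk _ y) *
          Ideal.Quotient.mk _ (X 1) =
      algebraMap (Hyp18 x y z i j k) (ForcingAlgebra18 x y z i j k) (Ideal.Quotient.mk _ z) := by
  have h := Ideal.Quotient.eq.mpr (Ideal.subset_span rfl :
    C (Ideal.Quotient.mk _ x) * X 0 + C (Ideal.Quotient.mk _ y) * X 1 -
      C (Ideal.Quotient.mk _ z) ∈ forcingIdeal18 x y z i j k)
  rwa [map_add, map_mul, map_mul] at h

theorem pow_mem_forcing_algebra_general {S : Type*} [CommRing S]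
    (x y z : S)
    (i j k : ℕ) (hik : i < k) (hj : 1 ≤ j) :
    algebraMap (Hyp18 x y z i j k) (ForcingAlgebra18 x y z i j k)
        (Ideal.Quotient.mk _ x) ^ i ∈
      Ideal.span {algebraMap (Hyp18 x y z i j k) (ForcingAlgebra18 x y z i j k)
          (Ideal.Quotient.mk _ y),
        algebraMap (Hyp18 x y z i j k) (ForcingAlgebra18 x y z i j k)
          (Ideal.Quotient.mk _ x) ^ (i + 1)} := by
  refine pow_mem_span_of_add_pow_eq_pow (A := ForcingAlgebra18 x y z i j k)
    (t₁ := Ideal.Quotient.mk _ (X 0)) (t₂ := Ideal.Quotient.mk _ (X 1)) hik hj ?_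
  rw [forcingAlgebra18_relation, ← map_pow _ _ k, ← hyp18_relation, map_add, map_pow, map_pow]

/-- Let `C` be a local three-dimensional regular ring with maximal ideal `m = (x,y,z)` and
`R = C/(x^i + y^j - z^k)` with `k > i ≥ 1`, `j ≥ 1`. In the forcing algebra
`A = R[T₁,T₂]/(xT₁ + yT₂ - z)` one has `x^i ∈ (y, x^{i+1})A`. -/
theorem pow_mem_forcing_algebra {S : Type*} [CommRing S] [IsNoetherianRing S] [IsLocalRing S]
    (x y z : S) (hdim : ringKrullDim S = 3)
    (hmax : IsLocalRing.maximalIdeal S = Ideal.span {x, y, z})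
    (i j k : ℕ) (hik : i < k) (hi : 1 ≤ i) (hj : 1 ≤ j) :
    algebraMap (Hyp18 x y z i j k) (ForcingAlgebra18 x y z i j k)
        (Ideal.Quotient.mk _ x) ^ i ∈
      Ideal.span {algebraMap (Hyp18 x y z i j k) (ForcingAlgebra18 x y z i j k)
          (Ideal.Quotient.mk _ y),
        algebraMap (Hyp18 x y z i j k) (ForcingAlgebra18 x y z i j k)
          (Ideal.Quotient.mk _ x) ^ (i + 1)} :=
  pow_mem_forcing_algebra_general x y z i j k hik hj
end
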